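/- arXiv:1108.2960 — 5 statements merged into one kernel-verified Lean document; each statement's English description precedes it below -/
import Mathlib

section
/- Let n = 2^m − 1, E = 𝔽_{2^m}, w a primitive element of E, and for 1 ≤ r ≤ n let h_r(x) = lcm of the minimal polynomials over 𝔽₂ of w, w², …, w^r. Then the cyclic code C_r ⊆ 𝔽₂ⁿ generated by h_r(x) (the BCH(m,r) code) has minimum distance at least r+1. -/
open Polynomial

/-- BCH bound: the cyclic code of length `n = 2^m − 1` generated by
`h_r = lcm{minpoly(wⁱ) : 1 ≤ i ≤ r}`, where `w` is a primitive element of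
`𝔽_{2^m}`, has minimum distance at least `r + 1`: every nonzero codeword,
i.e. every nonzero vector whose associated polynomial is divisible by `h_r`,
has Hamming weight at least `r + 1`. -/
theorem stmt5 (m r : ℕ) (hm : 1 ≤ m) (w : GaloisField 2 m)
    (hw : orderOf w = 2 ^ m - 1) (hr1 : 1 ≤ r) (hrn : r ≤ 2 ^ m - 1)
    (c : Fin (2 ^ m - 1) → ZMod 2) (hc : c ≠ 0)
    (hdvd : ((Finset.Icc 1 r).lcm fun i => minpoly (ZMod 2) (w ^ i)) ∣
      ∑ i : Fin (2 ^ m - 1), Polynomial.C (c i) * X ^ (i : ℕ)) :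
    r + 1 ≤ (Finset.univ.filter fun i => c i ≠ 0).card := by
  by_contra hlt
  push_neg at hlt
  set S : Finset (Fin (2 ^ m - 1)) := Finset.univ.filter fun i => c i ≠ 0 with hS
  have hsr : S.card ≤ r := Nat.lt_succ_iff.mp hlt
  have φinj : Function.Injective (algebraMap (ZMod 2) (GaloisField 2 m)) :=
    (algebraMap (ZMod 2) (GaloisField 2 m)).injective
  have hnpos : 1 ≤ 2 ^ m - 1 := by
    have : 2 ≤ 2 ^ m := by
      calc 2 = 2 ^ 1 := (pow_one 2).symm
      _ ≤ 2 ^ m := Nat.pow_le_pow_right (by norm_num) hm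
    omega
  have hw0 : w ≠ 0 := by
    intro h
    have h1 := pow_orderOf_eq_one w
    rw [hw, h, zero_pow (by omega)] at h1
    exact zero_ne_one h1
  -- evaluation at w^k is zero
  have heval : ∀ k, 1 ≤ k → k ≤ r →
      ∑ j ∈ S, (algebraMap (ZMod 2) (GaloisField 2 m)) (c j) * (w ^ (j : ℕ)) ^ k = 0 := by
    intro k h1 h2
    obtain ⟨q, hq⟩ := dvd_trans (Finset.dvd_lcm (Finset.mem_Icc.mpr ⟨h1, h2⟩)) hdvd
    have h0 : (aeval (w ^ k)) (∑ i : Fin (2 ^ m - 1), Polynomial.C (c i) * X ^ (i : ℕ)) = 0 := by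
      rw [hq, map_mul, minpoly.aeval, zero_mul]
    rw [map_sum] at h0
    simp only [map_mul, aeval_C, aeval_X_pow] at h0
    have hsub : ∑ j ∈ S, (algebraMap (ZMod 2) (GaloisField 2 m)) (c j) * ((w ^ k) ^ (j : ℕ))
        = ∑ j : Fin (2 ^ m - 1), (algebraMap (ZMod 2) (GaloisField 2 m)) (c j) * ((w ^ k) ^ (j : ℕ)) := by
      apply Finset.sum_subset (Finset.subset_univ S)
      intro j _ hj
      simp only [hS, Finset.mem_filter, Finset.mem_univ, true_and, not_not] at hj
      rw [hj, map_zero, zero_mul]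
    calc ∑ j ∈ S, (algebraMap (ZMod 2) (GaloisField 2 m)) (c j) * (w ^ (j:ℕ)) ^ k
        = ∑ j ∈ S, (algebraMap (ZMod 2) (GaloisField 2 m)) (c j) * ((w ^ k) ^ (j:ℕ)) := by
          exact Finset.sum_congr rfl fun j _ => by rw [pow_right_comm]
      _ = 0 := by rw [hsub, h0]
  set e : ↥S ≃ Fin S.card := S.equivFin with he
  set x : Fin S.card → GaloisField 2 m := fun l => w ^ (((e.symm l : ↥S) : Fin (2 ^ m - 1)) : ℕ) with hx
  have hxne : ∀ l, x l ≠ 0 := fun l => pow_ne_zero _ hw0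
  have hxinj : Function.Injective x := by
    intro a b hab
    have hu : IsUnit w := isUnit_iff_ne_zero.mpr hw0
    have hcoe : (hu.unit : GaloisField 2 m) = w := hu.unit_spec
    have h1 : ((hu.unit ^ (((e.symm a : ↥S) : Fin (2 ^ m - 1)) : ℕ) : (GaloisField 2 m)ˣ) : GaloisField 2 m)
        = ((hu.unit ^ (((e.symm b : ↥S) : Fin (2 ^ m - 1)) : ℕ) : (GaloisField 2 m)ˣ) : GaloisField 2 m) := by
      push_cast [hcoe]; exact hab
    have h2 := Units.ext h1
    have hou : orderOf hu.unit = 2 ^ m - 1 := by rw [← orderOf_units, hcoe, hw]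
    have hlta : (((e.symm a : ↥S) : Fin (2 ^ m - 1)) : ℕ) < orderOf hu.unit := by
      rw [hou]; exact ((e.symm a : ↥S) : Fin (2 ^ m - 1)).isLt
    have hltb : (((e.symm b : ↥S) : Fin (2 ^ m - 1)) : ℕ) < orderOf hu.unit := by
      rw [hou]; exact ((e.symm b : ↥S) : Fin (2 ^ m - 1)).isLt
    have h3 := pow_injOn_Iio_orderOf hlta hltb h2
    exact e.symm.injective (Subtype.ext (Fin.ext h3))
  set v : Fin S.card → GaloisField 2 m :=
    fun l => (algebraMap (ZMod 2) (GaloisField 2 m)) (c ((e.symm l : ↥S) : Fin (2 ^ m - 1))) * x l with hv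
  have hv0 : v = 0 := by
    apply Matrix.eq_zero_of_forall_pow_sum_mul_pow_eq_zero hxinj
    intro i
    have key := heval ((i : ℕ) + 1) (Nat.le_add_left 1 _)
      (by have h4 := i.isLt; omega)
    calc ∑ l : Fin S.card, v l * x l ^ (i : ℕ)
        = ∑ l : Fin S.card, (algebraMap (ZMod 2) (GaloisField 2 m)) (c ((e.symm l : ↥S) : Fin (2 ^ m - 1)))
            * (w ^ (((e.symm l : ↥S) : Fin (2 ^ m - 1)) : ℕ)) ^ ((i : ℕ) + 1) := by
          apply Finset.sum_congr rfl
          intro l _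
          rw [hv, hx]
          ring
      _ = ∑ a : ↥S, (algebraMap (ZMod 2) (GaloisField 2 m)) (c (a : Fin (2 ^ m - 1)))
            * (w ^ ((a : Fin (2 ^ m - 1)) : ℕ)) ^ ((i : ℕ) + 1) :=
          Equiv.sum_comp e.symm (fun a : ↥S => (algebraMap (ZMod 2) (GaloisField 2 m)) (c (a : Fin (2 ^ m - 1)))
            * (w ^ ((a : Fin (2 ^ m - 1)) : ℕ)) ^ ((i : ℕ) + 1))
      _ = ∑ j ∈ S, (algebraMap (ZMod 2) (GaloisField 2 m)) (c j) * (w ^ (j : ℕ)) ^ ((i : ℕ) + 1) :=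
          S.sum_coe_sort (fun j => (algebraMap (ZMod 2) (GaloisField 2 m)) (c j) * (w ^ (j : ℕ)) ^ ((i : ℕ) + 1))
      _ = 0 := key
  obtain ⟨j, hj⟩ : ∃ j, c j ≠ 0 := Function.ne_iff.mp hc
  have hjS : j ∈ S := by simp [hS, hj]
  have hvz : v (e ⟨j, hjS⟩) = 0 := by rw [hv0]; rfl
  rw [hv] at hvz
  have hcz : (algebraMap (ZMod 2) (GaloisField 2 m)) (c ((e.symm (e ⟨j, hjS⟩) : ↥S) : Fin (2 ^ m - 1))) = 0 := by
    rcases mul_eq_zero.mp hvz with h | h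
    · exact h
    · exact absurd h (hxne _)
  rw [Equiv.symm_apply_apply] at hcz
  exact hj (φinj (hcz.trans (map_zero _).symm))
end

section
/- Let n be odd, C ⊆ 𝔽₂ⁿ be the cyclic code with generator polynomial h(x) | xⁿ−1, and B = φ(C × C) ⊆ 𝔽₂^{2n} with φ the interleaving map (coordinate k of φ(a,b) is a_{k mod n} for even k and b_{k mod n} for odd k). Then B is a cyclic code of length 2n, equal to the ideal of 𝔽₂[x]/(x^{2n}−1) generated by h(x)². -/
open Polynomial

/-- The interleaving map: coordinate `k` of `interleave n hn a b` is
`a_{k mod n}` for even `k` and `b_{k mod n}` for odd `k`. -/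
def interleave (n : ℕ) (hn : 0 < n) (a b : Fin n → ZMod 2) :
    Fin (2 * n) → ZMod 2 := fun k =>
  if (k : ℕ) % 2 = 0 then a ⟨(k : ℕ) % n, Nat.mod_lt _ hn⟩
  else b ⟨(k : ℕ) % n, Nat.mod_lt _ hn⟩

/-- The polynomial `Σ cᵢ xⁱ` associated to a vector `c ∈ 𝔽₂ⁿ`. -/
noncomputable def polyOf {n : ℕ} (c : Fin n → ZMod 2) : Polynomial (ZMod 2) :=
  ∑ i : Fin n, Polynomial.C (c i) * X ^ (i : ℕ)

/-- Cyclic shift of a vector of length `N`. -/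
def shiftC {N : ℕ} (c : Fin N → ZMod 2) : Fin N → ZMod 2 :=
  fun k => c ⟨((k : ℕ) + N - 1) % N, Nat.mod_lt _ k.pos⟩

namespace Stmt11Aux

/-- The even representative of `j` modulo `2n`. -/
def ev (n j : ℕ) : ℕ := if j % 2 = 0 then j else j + n

/-- The odd representative of `j` modulo `2n`. -/
def od (n j : ℕ) : ℕ := if j % 2 = 0 then j + n else j

lemma ev_lt {n j : ℕ} (hj : j < n) : ev n j < 2 * n := by unfold ev; split <;> omega

lemma od_lt {n j : ℕ} (hj : j < n) : od n j < 2 * n := by unfold od; split <;> omega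

lemma ev_mod2 {n : ℕ} (ho : n % 2 = 1) (j : ℕ) : ev n j % 2 = 0 := by
  unfold ev; split <;> omega

lemma od_mod2 {n : ℕ} (ho : n % 2 = 1) (j : ℕ) : od n j % 2 = 1 := by
  unfold od; split <;> omega

lemma ev_modn {n j : ℕ} (hj : j < n) : ev n j % n = j := by
  unfold ev; split
  · exact Nat.mod_eq_of_lt hj
  · rw [Nat.add_mod_right]; exact Nat.mod_eq_of_lt hj

lemma od_modn {n j : ℕ} (hj : j < n) : od n j % n = j := by
  unfold od; split
  · rw [Nat.add_mod_right]; exact Nat.mod_eq_of_lt hj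
  · exact Nat.mod_eq_of_lt hj

lemma ev_of {n k : ℕ} (ho : n % 2 = 1) (hk : k < 2 * n) (hke : k % 2 = 0) :
    ev n (k % n) = k := by
  rcases lt_or_ge k n with hkn | hkn
  · rw [Nat.mod_eq_of_lt hkn]; unfold ev; rw [if_pos hke]
  · have h1 : k % n = k - n := by
      rw [Nat.mod_eq_sub_mod hkn, Nat.mod_eq_of_lt (by omega)]
    rw [h1]; unfold ev; rw [if_neg (by omega)]; omega

lemma od_of {n k : ℕ} (ho : n % 2 = 1) (hk : k < 2 * n) (hke : ¬ k % 2 = 0) :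
    od n (k % n) = k := by
  rcases lt_or_ge k n with hkn | hkn
  · rw [Nat.mod_eq_of_lt hkn]; unfold od; rw [if_neg hke]
  · have h1 : k % n = k - n := by
      rw [Nat.mod_eq_sub_mod hkn, Nat.mod_eq_of_lt (by omega)]
    rw [h1]; unfold od; rw [if_pos (by omega)]; omega

/-- Parity-splitting equivalence `Fin n ⊕ Fin n ≃ Fin (2n)`. -/
def eqv (n : ℕ) (hn : 0 < n) (ho : n % 2 = 1) : Fin n ⊕ Fin n ≃ Fin (2 * n) where
  toFun s := Sum.elim (fun j : Fin n => (⟨ev n j, ev_lt j.2⟩ : Fin (2 * n)))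
    (fun j : Fin n => (⟨od n j, od_lt j.2⟩ : Fin (2 * n))) s
  invFun k := if (k : ℕ) % 2 = 0 then .inl ⟨(k : ℕ) % n, Nat.mod_lt _ hn⟩
    else .inr ⟨(k : ℕ) % n, Nat.mod_lt _ hn⟩
  left_inv s := by
    rcases s with j | j
    · dsimp only [Sum.elim_inl]
      rw [if_pos (ev_mod2 ho j)]
      congr 1
      exact Fin.ext (ev_modn j.2)
    · dsimp only [Sum.elim_inr]
      rw [if_neg (by rw [od_mod2 ho j]; omega)]
      congr 1
      exact Fin.ext (od_modn j.2)
  right_inv k := by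
    dsimp only
    by_cases hk : (k : ℕ) % 2 = 0
    · rw [if_pos hk]
      dsimp only [Sum.elim_inl]
      exact Fin.ext (ev_of ho k.2 hk)
    · rw [if_neg hk]
      dsimp only [Sum.elim_inr]
      exact Fin.ext (od_of ho k.2 hk)

lemma two_eq_zero : (2 : Polynomial (ZMod 2)) = 0 := by
  have h : ((2 : ℕ) : Polynomial (ZMod 2)) = C ((2 : ℕ) : ZMod 2) := by
    rw [map_natCast]
  have h2 : ((2 : ℕ) : ZMod 2) = 0 := by decide
  rw [h2, map_zero] at h
  exact_mod_cast h

lemma cast_even {j : ℕ} (hj : j % 2 = 0) : ((j : ℕ) : ZMod 2) = 0 := by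
  rw [← ZMod.natCast_mod j 2, hj]; rfl

lemma cast_odd {j : ℕ} (hj : j % 2 = 1) : ((j : ℕ) : ZMod 2) = 1 := by
  rw [← ZMod.natCast_mod j 2, hj]; rfl

lemma term_ev {n : ℕ} (j : ℕ) (r : ZMod 2) :
    C r * X ^ (ev n j) = C r * X ^ j
      + (X ^ n - 1) * (X * derivative (C r * X ^ j)) := by
  rw [derivative_C_mul_X_pow]
  rcases Nat.mod_two_eq_zero_or_one j with hj | hj
  · unfold ev; rw [if_pos hj, cast_even hj, mul_zero, map_zero]
    ring
  · unfold ev; rw [if_neg (by omega), cast_odd hj, mul_one]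
    have hx : X * (C r * X ^ (j - 1)) = C r * X ^ j := by
      have hj1 : j - 1 + 1 = j := by omega
      calc X * (C r * X ^ (j - 1)) = C r * (X ^ (j - 1) * X) := by ring
        _ = C r * X ^ (j - 1 + 1) := by rw [pow_succ]
        _ = C r * X ^ j := by rw [hj1]
    rw [hx, pow_add]
    ring

lemma term_od {n : ℕ} (j : ℕ) (r : ZMod 2) :
    C r * X ^ (od n j) = C r * X ^ j
      + (X ^ n - 1) * (C r * X ^ j + X * derivative (C r * X ^ j)) := by
  rw [derivative_C_mul_X_pow]
  rcases Nat.mod_two_eq_zero_or_one j with hj | hj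
  · unfold od; rw [if_pos hj, cast_even hj, mul_zero, map_zero, pow_add]
    ring
  · unfold od; rw [if_neg (by omega), cast_odd hj, mul_one]
    have hx : X * (C r * X ^ (j - 1)) = C r * X ^ j := by
      have hj1 : j - 1 + 1 = j := by omega
      calc X * (C r * X ^ (j - 1)) = C r * (X ^ (j - 1) * X) := by ring
        _ = C r * X ^ (j - 1 + 1) := by rw [pow_succ]
        _ = C r * X ^ j := by rw [hj1]
    rw [hx]
    linear_combination (-(X ^ n - 1) * (C r * X ^ j)) * two_eq_zero

/-- The key identity: the polynomial of the interleaving. -/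
lemma polyOf_interleave {n : ℕ} (hn : 0 < n) (ho : n % 2 = 1)
    (a b : Fin n → ZMod 2) :
    polyOf (interleave n hn a b) = polyOf a + polyOf b
      + (X ^ n - 1) * (X * derivative (polyOf a)
          + (polyOf b + X * derivative (polyOf b))) := by
  have hsum : polyOf (interleave n hn a b)
      = (∑ j : Fin n, C (a j) * X ^ (ev n j))
        + (∑ j : Fin n, C (b j) * X ^ (od n j)) := by
    rw [polyOf,
      ← Equiv.sum_comp (eqv n hn ho)
        (fun k : Fin (2 * n) => C (interleave n hn a b k) * X ^ (k : ℕ)),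
      Fintype.sum_sum_type]
    congr 1
    · refine Finset.sum_congr rfl fun j _ => ?_
      show C (interleave n hn a b ⟨ev n j, ev_lt j.2⟩) * X ^ (ev n j)
        = C (a j) * X ^ (ev n j)
      have : interleave n hn a b ⟨ev n j, ev_lt j.2⟩ = a j := by
        simp only [interleave]
        rw [if_pos (ev_mod2 ho (j : ℕ))]
        congr 1
        exact Fin.ext (ev_modn j.2)
      rw [this]
    · refine Finset.sum_congr rfl fun j _ => ?_
      show C (interleave n hn a b ⟨od n j, od_lt j.2⟩) * X ^ (od n j)
        = C (b j) * X ^ (od n j)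
      have : interleave n hn a b ⟨od n j, od_lt j.2⟩ = b j := by
        simp only [interleave]
        rw [if_neg (by rw [od_mod2 ho (j : ℕ)]; omega)]
        congr 1
        exact Fin.ext (od_modn j.2)
      rw [this]
  have eA : (∑ j : Fin n, C (a j) * X ^ (ev n j))
      = polyOf a + (X ^ n - 1) * (X * derivative (polyOf a)) := by
    rw [polyOf, derivative_sum, Finset.mul_sum, Finset.mul_sum,
      ← Finset.sum_add_distrib]
    exact Finset.sum_congr rfl fun j _ => term_ev (j : ℕ) (a j)
  have eB : (∑ j : Fin n, C (b j) * X ^ (od n j))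
      = polyOf b + (X ^ n - 1) * (polyOf b + X * derivative (polyOf b)) := by
    rw [polyOf, derivative_sum, Finset.mul_sum]
    rw [show (∑ j : Fin n, C (b j) * X ^ (j : ℕ))
        + (X ^ n - 1) * ((∑ j : Fin n, C (b j) * X ^ (j : ℕ))
          + ∑ j : Fin n, X * derivative (C (b j) * X ^ (j : ℕ)))
      = ∑ j : Fin n, (C (b j) * X ^ (j : ℕ)
          + (X ^ n - 1) * (C (b j) * X ^ (j : ℕ)
            + X * derivative (C (b j) * X ^ (j : ℕ)))) from ?_]
    · exact Finset.sum_congr rfl fun j _ => term_od (j : ℕ) (b j)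
    · rw [← Finset.sum_add_distrib, Finset.mul_sum, ← Finset.sum_add_distrib]
  rw [hsum, eA, eB]
  ring

/-- Cyclic-shift equivalence on `Fin N`. -/
def sigma (N : ℕ) (hN : 0 < N) : Fin N ≃ Fin N where
  toFun i := ⟨((i : ℕ) + 1) % N, Nat.mod_lt _ hN⟩
  invFun j := ⟨((j : ℕ) + N - 1) % N, Nat.mod_lt _ hN⟩
  left_inv i := by
    apply Fin.ext
    show (((i : ℕ) + 1) % N + N - 1) % N = (i : ℕ)
    by_cases hi : (i : ℕ) + 1 = N
    · rw [hi, Nat.mod_self, show 0 + N - 1 = N - 1 by omega,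
        Nat.mod_eq_of_lt (by omega)]
      omega
    · have hlt : (i : ℕ) + 1 < N := by have := i.2; omega
      rw [Nat.mod_eq_of_lt hlt, show (i : ℕ) + 1 + N - 1 = (i : ℕ) + N by omega,
        Nat.add_mod_right]
      exact Nat.mod_eq_of_lt i.2
  right_inv j := by
    apply Fin.ext
    show (((j : ℕ) + N - 1) % N + 1) % N = (j : ℕ)
    by_cases hj : (j : ℕ) = 0
    · rw [hj, show 0 + N - 1 = N - 1 by omega,
        Nat.mod_eq_of_lt (show N - 1 < N by omega),
        show N - 1 + 1 = N by omega, Nat.mod_self]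
    · have hjlt : (j : ℕ) < N := j.2
      rw [show (j : ℕ) + N - 1 = ((j : ℕ) - 1) + N by omega, Nat.add_mod_right,
        Nat.mod_eq_of_lt (show (j : ℕ) - 1 < N by omega),
        show (j : ℕ) - 1 + 1 = (j : ℕ) by omega]
      exact Nat.mod_eq_of_lt j.2

lemma polyOf_shiftC {N : ℕ} (hN : 0 < N) (c : Fin N → ZMod 2) :
    polyOf (shiftC c) = X * polyOf c
      - (X ^ N - 1) * C (c ⟨N - 1, by omega⟩) := by
  have h1 : polyOf (shiftC c) = ∑ i : Fin N, C (c i) * X ^ (((i : ℕ) + 1) % N) := by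
    rw [polyOf,
      ← Equiv.sum_comp (sigma N hN)
        (fun j : Fin N => C (shiftC c j) * X ^ (j : ℕ))]
    refine Finset.sum_congr rfl fun i _ => ?_
    show C (shiftC c (sigma N hN i)) * X ^ ((sigma N hN i : Fin N) : ℕ)
      = C (c i) * X ^ (((i : ℕ) + 1) % N)
    have hidx : shiftC c (sigma N hN i) = c i := by
      show c ⟨(((sigma N hN i) : ℕ) + N - 1) % N, _⟩ = c i
      congr 1
      exact (sigma N hN).left_inv i
    rw [hidx]
    rfl
  rw [h1]
  have step : ∀ i : Fin N, C (c i) * X ^ (((i : ℕ) + 1) % N)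
      = X * (C (c i) * X ^ (i : ℕ))
        - (if i = (⟨N - 1, by omega⟩ : Fin N) then
            (X ^ N - 1) * C (c ⟨N - 1, by omega⟩) else 0) := by
    intro i
    by_cases hi : i = (⟨N - 1, by omega⟩ : Fin N)
    · rw [if_pos hi]
      have hiv : (i : ℕ) = N - 1 := by rw [hi]
      have hm : ((i : ℕ) + 1) % N = 0 := by
        rw [hiv, Nat.sub_add_cancel hN, Nat.mod_self]
      have hci : c ⟨N - 1, by omega⟩ = c i := congrArg c (Fin.ext hiv.symm)
      have hXi : (X : Polynomial (ZMod 2)) * X ^ (i : ℕ) = X ^ N := by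
        rw [← pow_succ']
        congr 1
        omega
      rw [hm, pow_zero, hci, ← hXi]
      ring
    · rw [if_neg hi, sub_zero]
      have : ((i : ℕ) + 1) % N = (i : ℕ) + 1 := by
        apply Nat.mod_eq_of_lt
        have := i.2
        have : (i : ℕ) ≠ N - 1 := fun hc => hi (Fin.ext hc)
        omega
      rw [this, pow_succ]
      ring
  rw [Finset.sum_congr rfl fun i _ => step i, Finset.sum_sub_distrib,
    ← Finset.mul_sum, ← polyOf, Finset.sum_ite_eq' Finset.univ]
  rw [if_pos (Finset.mem_univ _)]

lemma dvd_shift {N : ℕ} (hN : 0 < N) (g : Polynomial (ZMod 2))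
    (hg : g ∣ X ^ N - 1) (c : Fin N → ZMod 2) (hc : g ∣ polyOf c) :
    g ∣ polyOf (shiftC c) := by
  rw [polyOf_shiftC hN]
  exact dvd_sub (hc.mul_left X) (hg.mul_right _)

end Stmt11Aux

open Stmt11Aux in
/-- If `C` is the cyclic code of odd length `n` with generator `h ∣ xⁿ−1`,
then `B = φ(C × C)` is a cyclic code of length `2n` (closed under cyclic
shift), equal to the ideal of `𝔽₂[x]/(x^{2n}−1)` generated by `h²`: a vector
of length `2n` lies in `B` iff its polynomial is divisible by `h²`. -/
theorem stmt11 (n : ℕ) (hn : 0 < n) (hodd : Odd n)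
    (h : Polynomial (ZMod 2)) (hdvd : h ∣ X ^ n - 1) :
    (∀ c : Fin (2 * n) → ZMod 2,
      (∃ a b : Fin n → ZMod 2, h ∣ polyOf a ∧ h ∣ polyOf b ∧
        c = interleave n hn a b) →
      ∃ a b : Fin n → ZMod 2, h ∣ polyOf a ∧ h ∣ polyOf b ∧
        shiftC c = interleave n hn a b) ∧
    (∀ c : Fin (2 * n) → ZMod 2,
      (∃ a b : Fin n → ZMod 2, h ∣ polyOf a ∧ h ∣ polyOf b ∧
        c = interleave n hn a b) ↔ h ^ 2 ∣ polyOf c) := by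
  have ho : n % 2 = 1 := Nat.odd_iff.mp hodd
  obtain ⟨w, hfw⟩ := hdvd
  have h2 := two_eq_zero
  have hcn : ((n : ℕ) : ZMod 2) = 1 := cast_odd ho
  have hder : derivative h * w + h * derivative w = X ^ (n - 1) := by
    have hd := congrArg derivative hfw
    rw [derivative_mul, derivative_sub, derivative_one, derivative_X_pow,
      sub_zero, hcn, map_one, one_mul] at hd
    exact hd.symm
  have hF1 : 1 + X * w * derivative h = h * (w + X * derivative w) := by
    have hmul : X * (derivative h * w + h * derivative w) = X ^ n := by
      rw [hder, ← pow_succ']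
      congr 1
      omega
    linear_combination (-1) * hmul - hfw + (X * w * derivative h - h * w) * h2
  have hcop : IsCoprime h w := by
    have hBez : IsCoprime ((X : Polynomial (ZMod 2)) ^ n - 1) (X ^ (n - 1)) := by
      apply IsCoprime.pow_right
      refine ⟨-1, X ^ (n - 1), ?_⟩
      have e1 : (X : Polynomial (ZMod 2)) ^ (n - 1) * X = X ^ n := by
        rw [← pow_succ]; congr 1; omega
      linear_combination e1
    obtain ⟨u, v, huv⟩ := hBez
    exact ⟨v * derivative w, u * h + v * derivative h,
      by linear_combination huv + v * hder - u * hfw⟩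
  have hh0 : h ≠ 0 := by
    intro h0
    rw [h0, zero_mul] at hfw
    exact X_pow_sub_C_ne_zero hn (1 : ZMod 2) (by simpa using hfw)
  have main : ∀ c : Fin (2 * n) → ZMod 2,
      (∃ a b : Fin n → ZMod 2, h ∣ polyOf a ∧ h ∣ polyOf b ∧
        c = interleave n hn a b) ↔ h ^ 2 ∣ polyOf c := by
    intro c
    constructor
    · rintro ⟨a, b, ⟨a₁, ha⟩, ⟨b₁, hb⟩, rfl⟩
      rw [polyOf_interleave hn ho, hfw, ha, hb, derivative_mul, derivative_mul]
      refine ⟨(a₁ + b₁) * (w + X * derivative w)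
        + w * (X * derivative a₁ + (b₁ + X * derivative b₁)), ?_⟩
      linear_combination (h * (a₁ + b₁)) * hF1
    · intro hc
      set a : Fin n → ZMod 2 := fun j => c ⟨ev n j, ev_lt j.2⟩ with hadef
      set b : Fin n → ZMod 2 := fun j => c ⟨od n j, od_lt j.2⟩ with hbdef
      have hc_eq : c = interleave n hn a b := by
        funext k
        simp only [interleave]
        split_ifs with hk
        · show c k = a ⟨(k : ℕ) % n, Nat.mod_lt _ hn⟩
          rw [hadef]
          congr 1
          exact (Fin.ext (ev_of ho k.2 hk)).symm
        · show c k = b ⟨(k : ℕ) % n, Nat.mod_lt _ hn⟩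
          rw [hbdef]
          congr 1
          exact (Fin.ext (od_of ho k.2 hk)).symm
      rw [hc_eq, polyOf_interleave hn ho, hfw] at hc
      have hAB : h ∣ polyOf a + polyOf b := by
        have h1 : h ∣ polyOf a + polyOf b
            + h * w * (X * derivative (polyOf a)
              + (polyOf b + X * derivative (polyOf b))) :=
          dvd_trans (dvd_pow_self h two_ne_zero) hc
        have h3 : h ∣ h * w * (X * derivative (polyOf a)
            + (polyOf b + X * derivative (polyOf b))) :=
          (dvd_mul_right h w).mul_right _
        simpa using dvd_sub h1 h3
      obtain ⟨s, hs⟩ := hAB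
      have hsK : h ∣ s + w * (X * derivative (polyOf a)
          + (polyOf b + X * derivative (polyOf b))) := by
        have he : polyOf a + polyOf b
            + h * w * (X * derivative (polyOf a)
              + (polyOf b + X * derivative (polyOf b)))
          = h * (s + w * (X * derivative (polyOf a)
              + (polyOf b + X * derivative (polyOf b)))) := by
          linear_combination hs
        rw [he, pow_two] at hc
        exact (mul_dvd_mul_iff_left hh0).mp hc
      have hds : derivative (polyOf a) + derivative (polyOf b)
          = derivative h * s + h * derivative s := by
        have hd := congrArg derivative hs
        rwa [derivative_add, derivative_mul] at hd
      have hwB : h ∣ w * polyOf b := by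
        have key : w * polyOf b = (s + w * (X * derivative (polyOf a)
              + (polyOf b + X * derivative (polyOf b))))
            - h * (s * (w + X * derivative w) + w * X * derivative s) := by
          linear_combination (-(w * X)) * hds - s * hF1
        rw [key]
        exact dvd_sub hsK (dvd_mul_right h _)
      have hB : h ∣ polyOf b := hcop.dvd_of_dvd_mul_left hwB
      have hA : h ∣ polyOf a := by
        have he : polyOf a = h * s - polyOf b := by linear_combination hs
        rw [he]
        exact dvd_sub (dvd_mul_right h s) hB
      exact ⟨a, b, hA, hB, hc_eq⟩
  have hg2 : h ^ 2 ∣ X ^ (2 * n) - 1 := by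
    have he : (X ^ (2 * n) - 1 : Polynomial (ZMod 2)) = (X ^ n - 1) ^ 2 := by
      have hp : (X : Polynomial (ZMod 2)) ^ (2 * n) = (X ^ n) ^ 2 := by
        rw [mul_comm 2 n, pow_mul]
      rw [hp]
      linear_combination (X ^ n - 1 : Polynomial (ZMod 2)) * h2
    rw [he]
    exact pow_dvd_pow_of_dvd ⟨w, hfw⟩ 2
  refine ⟨?_, main⟩
  intro c hcB
  have h1 : h ^ 2 ∣ polyOf c := (main c).mp hcB
  have h2' : h ^ 2 ∣ polyOf (shiftC c) := dvd_shift (by omega) _ hg2 c h1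
  exact (main _).mpr h2'
end

section
/- Let a(x) = Σ_{i=0}^{n−1} a_i x^i ∈ 𝔽₂[x] with n odd. Writing a(x) = a_even(x²) + x·a_odd(x²) where a_even collects even-indexed coefficients, we have in 𝔽₂[x]/(x^{2n}−1): a_even(x²) + x^{n+1} a_odd(x²) ≡ a(x) + x(xⁿ+1)a_odd(x²). In particular the polynomial F(x) = a_even(x²) + x^{n+1} a_odd(x²) contains only even powers of x (using that n is odd), and hence is a square of a polynomial in 𝔽₂[x]. -/
open Polynomial Finset

/-- Writing `a(x) = a_even(x²) + x·a_odd(x²)` for `a ∈ 𝔽₂ⁿ` with `n` odd,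
the polynomial `F(x) = a_even(x²) + x^{n+1}·a_odd(x²)` satisfies
`F(x) = a(x) + x(xⁿ+1)·a_odd(x²)` in `𝔽₂[x]`, and `F` contains only even
powers of `x`, hence is a square of a polynomial over `𝔽₂`. -/
theorem stmt13 (n : ℕ) (hodd : Odd n) (a : Fin n → ZMod 2) :
    ((∑ i ∈ univ.filter (fun i : Fin n => (i : ℕ) % 2 = 0),
        Polynomial.C (a i) * X ^ (i : ℕ)) +
      X ^ (n + 1) * ∑ i ∈ univ.filter (fun i : Fin n => (i : ℕ) % 2 = 1),
        Polynomial.C (a i) * X ^ ((i : ℕ) - 1)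
      = (∑ i : Fin n, Polynomial.C (a i) * X ^ (i : ℕ)) +
        X * (X ^ n + 1) * ∑ i ∈ univ.filter (fun i : Fin n => (i : ℕ) % 2 = 1),
          Polynomial.C (a i) * X ^ ((i : ℕ) - 1)) ∧
    ∃ f : Polynomial (ZMod 2),
      (∑ i ∈ univ.filter (fun i : Fin n => (i : ℕ) % 2 = 0),
        Polynomial.C (a i) * X ^ (i : ℕ)) +
      X ^ (n + 1) * ∑ i ∈ univ.filter (fun i : Fin n => (i : ℕ) % 2 = 1),
        Polynomial.C (a i) * X ^ ((i : ℕ) - 1) = f ^ 2 := by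
  obtain ⟨m, hm⟩ := hodd
  constructor
  · have hsplit : (∑ i : Fin n, Polynomial.C (a i) * X ^ (i : ℕ)) =
        (∑ i ∈ univ.filter (fun i : Fin n => (i : ℕ) % 2 = 0),
          Polynomial.C (a i) * X ^ (i : ℕ)) +
        ∑ i ∈ univ.filter (fun i : Fin n => (i : ℕ) % 2 = 1),
          Polynomial.C (a i) * X ^ (i : ℕ) := by
      rw [← Finset.sum_filter_add_sum_filter_not univ (fun i : Fin n => (i : ℕ) % 2 = 0)]
      congr 1
      apply Finset.sum_congr _ (fun _ _ => rfl)
      ext i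
      simp only [Finset.mem_filter, Finset.mem_univ, true_and]
      omega
    have hodd' : (∑ i ∈ univ.filter (fun i : Fin n => (i : ℕ) % 2 = 1),
          Polynomial.C (a i) * X ^ (i : ℕ)) =
        X * ∑ i ∈ univ.filter (fun i : Fin n => (i : ℕ) % 2 = 1),
          Polynomial.C (a i) * X ^ ((i : ℕ) - 1) := by
      rw [Finset.mul_sum]
      apply Finset.sum_congr rfl
      intro i hi
      simp only [Finset.mem_filter] at hi
      have h1 : (i : ℕ) = (i : ℕ) - 1 + 1 := by omega
      nth_rewrite 1 [h1]
      rw [pow_succ]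
      ring
    rw [hsplit, hodd', pow_succ]
    have h2 : (2 : Polynomial (ZMod 2)) = 0 := CharTwo.two_eq_zero
    linear_combination -(X * ∑ i ∈ univ.filter (fun i : Fin n => (i : ℕ) % 2 = 1),
      Polynomial.C (a i) * X ^ ((i : ℕ) - 1)) * h2
  · refine ⟨(∑ i ∈ univ.filter (fun i : Fin n => (i : ℕ) % 2 = 0),
        Polynomial.C (a i) * X ^ ((i : ℕ) / 2)) +
      ∑ i ∈ univ.filter (fun i : Fin n => (i : ℕ) % 2 = 1),
        Polynomial.C (a i) * X ^ ((n + (i : ℕ)) / 2), ?_⟩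
    have hchar : (2 : ℕ).Prime := Nat.prime_two
    rw [add_pow_char, sum_pow_char, sum_pow_char]
    have hsq : ∀ x : ZMod 2, x ^ 2 = x := by decide
    congr 1
    · apply Finset.sum_congr rfl
      intro i hi
      simp only [Finset.mem_filter] at hi
      rw [mul_pow, ← C_pow, hsq, ← pow_mul]
      congr 2
      omega
    · rw [Finset.mul_sum]
      apply Finset.sum_congr rfl
      intro i hi
      simp only [Finset.mem_filter] at hi
      rw [mul_pow, ← C_pow, hsq, ← pow_mul]
      have he : (n + (i : ℕ)) / 2 * 2 = n + 1 + ((i : ℕ) - 1) := by omega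
      rw [he, pow_add]
      ring
end

section
/- Let Γ be a (q+1)-regular graph with adjacency second normalized eigenvalue λ, S a set indexing edge-labels, and B ⊆ 𝔽₂^S a linear code of rate r(B) > 1/2 and normalized distance δ(B) > λ. Then the Tanner/Cayley code C(G,S,B) on the edges of Cay(G,S) has rate at least 2r(B) − 1 > 0 and normalized distance at least ((δ(B) − λ)/(1 − λ))², hence is a good code when these are bounded below by constants. -/
/-- Hamming weight of a `𝔽₂`-vector indexed by a finite type. -/
def wtF {α : Type*} [Fintype α] (c : α → ZMod 2) : ℕ :=
  (Finset.univ.filter fun i => c i ≠ 0).card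

/-!
Write `C(G,S,B)` as the intersection of the `B`-local labelings of the directed edges `G × S`
with the labelings invariant under edge reversal `(g, s) ↦ (g s, s⁻¹)`. In characteristic 2,
`L = 1 - τ*` squares to zero, so the invariants have dimension at least `|G|(q+1)/2`, and the
rate bound is dimension counting for an intersection.

For the distance, let `Y` be the set of vertices where a nonzero codeword `c` has a nonzero local
view. Local distance gives `wt c ≥ δ (q+1) |Y|`, while every nonzero edge has both ends in `Y`,
so `wt c` is at most the number of directed edges inside `Y`. The spectral hypothesis applied to
the mean-zero function `|G| 1_Y - |Y|` (expander mixing) bounds that number by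
`(q+1)(|Y|² + λ |Y| (|G| - |Y|)) / |G|`. Together these force `|Y| / |G| ≥ (δ - λ)/(1 - λ)`,
and then `wt c / (|G|(q+1)) ≥ δ |Y| / |G|` gives the square.
-/

open Module Finset

theorem finrank_le_two_mul_finrank_ker_of_comp_self_eq_zero {K V : Type*} [DivisionRing K]
    [AddCommGroup V] [Module K V] [FiniteDimensional K V] (L : V →ₗ[K] V) (hL : L ∘ₗ L = 0) :
    finrank K V ≤ 2 * finrank K (LinearMap.ker L) := by
  have hrange : finrank K (LinearMap.range L) ≤ finrank K (LinearMap.ker L) :=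
    Submodule.finrank_mono (LinearMap.range_le_ker_iff.2 hL)
  have := LinearMap.finrank_range_add_finrank_ker L
  omega

theorem card_le_two_mul_finrank_ker_id_sub_funLeft {K X : Type*} [Field K] [CharP K 2]
    [Fintype X] {τ : X → X} (hτ : Function.Involutive τ) :
    Fintype.card X ≤ 2 * finrank K (LinearMap.ker (LinearMap.id - LinearMap.funLeft K K τ)) := by
  rw [← Module.finrank_fintype_fun_eq_card K]
  refine finrank_le_two_mul_finrank_ker_of_comp_self_eq_zero _ ?_
  ext c x
  simp only [LinearMap.comp_apply, LinearMap.sub_apply, LinearMap.id_apply,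
    LinearMap.funLeft_apply, Pi.sub_apply, hτ x, LinearMap.zero_apply, Pi.zero_apply]
  linear_combination (c x - c (τ x)) * CharTwo.two_eq_zero (R := K)

theorem finrank_add_finrank_le_finrank_inf_add {K V : Type*} [DivisionRing K]
    [AddCommGroup V] [Module K V] [FiniteDimensional K V] (s t : Submodule K V) :
    finrank K s + finrank K t ≤ finrank K ↥(s ⊓ t) + finrank K V := by
  rw [← Submodule.finrank_sup_add_finrank_inf_eq]
  have := Submodule.finrank_le (s ⊔ t)
  omega

section LocalCode

variable {K β : Type*}

def localCode [Semiring K] (α : Type*) (B : Submodule K (β → K)) : Submodule K (α × β → K) where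
  carrier := {c | ∀ a, Function.curry c a ∈ B}
  add_mem' hc hd a := B.add_mem (hc a) (hd a)
  zero_mem' _ := B.zero_mem
  smul_mem' r _ hc a := B.smul_mem r (hc a)

def localCodeEquiv [Semiring K] {α : Type*} (B : Submodule K (β → K)) :
    localCode α B ≃ₗ[K] (α → B) where
  toFun c a := ⟨Function.curry c.1 a, c.2 a⟩
  invFun F := ⟨fun p => (F p.1).1 p.2, fun a => (F a).2⟩
  left_inv _ := rfl
  right_inv _ := rfl
  map_add' _ _ := rfl
  map_smul' _ _ := rfl

theorem finrank_localCode [Field K] {α : Type*} [Fintype α] [Fintype β]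
    (B : Submodule K (β → K)) :
    finrank K (localCode α B) = Fintype.card α * finrank K B := by
  rw [(localCodeEquiv B).finrank_eq, Module.finrank_pi_fintype, sum_const, card_univ, smul_eq_mul]

end LocalCode

section Cayley

variable {G : Type*} [Group G] {S : Finset G} (hsym : ∀ s ∈ S, s⁻¹ ∈ S)

def reverseEdge (p : G × S) : G × S := (p.1 * p.2, ⟨(p.2 : G)⁻¹, hsym _ p.2.2⟩)

theorem reverseEdge_involutive : Function.Involutive (reverseEdge hsym) := by
  rintro ⟨g, s⟩
  simp [reverseEdge]

def cayleyCode (K : Type*) [Ring K] (B : Submodule K (S → K)) : Submodule K (G × S → K) :=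
  LinearMap.ker (LinearMap.id - LinearMap.funLeft K K (reverseEdge hsym)) ⊓ localCode G B

theorem mem_cayleyCode {K : Type*} [Ring K] (B : Submodule K (S → K)) (c : G × S → K) :
    c ∈ cayleyCode hsym K B ↔
      (∀ (g : G) (s : S), c (g * s, ⟨(s : G)⁻¹, hsym s s.2⟩) = c (g, s)) ∧
        ∀ g : G, (fun s : S => c (g, s)) ∈ B := by
  simp only [cayleyCode, Submodule.mem_inf, LinearMap.mem_ker, LinearMap.sub_apply,
    LinearMap.id_apply, sub_eq_zero, funext_iff, LinearMap.funLeft_apply, Prod.forall]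
  exact and_congr ⟨fun h g s => (h g s).symm, fun h g s => (h g s).symm⟩ Iff.rfl

theorem card_mul_finrank_le_finrank_cayleyCode [Fintype G] {K : Type*} [Field K] [CharP K 2]
    (B : Submodule K (S → K)) :
    2 * (Fintype.card G * finrank K B) ≤
      2 * finrank K (cayleyCode hsym K B) + Fintype.card G * S.card := by
  have hsymm := card_le_two_mul_finrank_ker_id_sub_funLeft (K := K) (reverseEdge_involutive hsym)
  have hinf := finrank_add_finrank_le_finrank_inf_add
    (LinearMap.ker (LinearMap.id - LinearMap.funLeft K K (reverseEdge hsym))) (localCode G B)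
  rw [finrank_localCode, Module.finrank_fintype_fun_eq_card] at hinf
  rw [Fintype.card_prod, Fintype.card_coe] at hsymm hinf
  rw [cayleyCode]
  omega

end Cayley

section Weight

variable {α β : Type*} [Fintype α] [Fintype β]

theorem wtF_zero : wtF (0 : β → ZMod 2) = 0 := by
  simp [wtF]

theorem wtF_le_card (b : β → ZMod 2) : wtF b ≤ Fintype.card β :=
  card_filter_le _ _

theorem wtF_eq_sum_wtF_curry (c : α × β → ZMod 2) :
    wtF c = ∑ a, wtF (Function.curry c a) := by
  rw [wtF, card_filter, Fintype.sum_prod_type]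
  exact sum_congr rfl fun a _ => (card_filter _ _).symm

def localSupport (c : α × β → ZMod 2) : Finset α :=
  univ.filter fun a => Function.curry c a ≠ 0

theorem localSupport_nonempty {c : α × β → ZMod 2} (hc : c ≠ 0) : (localSupport c).Nonempty := by
  obtain ⟨⟨a, b⟩, hab⟩ := Function.ne_iff.1 hc
  exact ⟨a, mem_filter.2 ⟨mem_univ a, fun h => hab (congrFun h b)⟩⟩

theorem wtF_eq_sum_localSupport (c : α × β → ZMod 2) :
    wtF c = ∑ a ∈ localSupport c, wtF (Function.curry c a) := by
  rw [wtF_eq_sum_wtF_curry, localSupport, sum_filter_of_ne]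
  intro a _ ha hzero
  exact ha (hzero ▸ wtF_zero)

theorem wtF_le_card_mul_card_localSupport (c : α × β → ZMod 2) :
    wtF c ≤ Fintype.card β * #(localSupport c) := by
  rw [wtF_eq_sum_localSupport, mul_comm]
  exact sum_le_card_nsmul _ _ _ fun a _ => wtF_le_card _

theorem mul_card_localSupport_le_wtF (c : α × β → ZMod 2) {δ : ℝ}
    (hδ : ∀ a, Function.curry c a ≠ 0 → δ * Fintype.card β ≤ wtF (Function.curry c a)) :
    δ * Fintype.card β * #(localSupport c) ≤ wtF c := by
  rw [wtF_eq_sum_localSupport, Nat.cast_sum, mul_comm, ← nsmul_eq_mul]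
  exact card_nsmul_le_sum _ _ _ fun a ha => hδ a (mem_filter.1 ha).2

end Weight

section Mixing

variable {G : Type*} [Group G] [Fintype G] [DecidableEq G]

def innerEdgeCount (S Y : Finset G) : ℕ := ∑ g ∈ Y, #{s ∈ S | g * s ∈ Y}

theorem wtF_le_innerEdgeCount {S : Finset G} (hsym : ∀ s ∈ S, s⁻¹ ∈ S)
    (c : G × S → ZMod 2)
    (hc : ∀ (g : G) (s : S), c (g * s, ⟨(s : G)⁻¹, hsym s s.2⟩) = c (g, s)) :
    wtF c ≤ innerEdgeCount S (localSupport c) := by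
  rw [wtF_eq_sum_localSupport, innerEdgeCount]
  refine sum_le_sum fun g _ => card_le_card_of_injOn Subtype.val ?_ Subtype.val_injective.injOn
  intro s hs
  have hs : c (g, s) ≠ 0 := (mem_filter.1 hs).2
  refine mem_filter.2 ⟨s.2, mem_filter.2 ⟨mem_univ _, fun h => hs ?_⟩⟩
  rw [← hc, ← Function.curry_apply c, h, Pi.zero_apply]

theorem sum_sum_indicator_mul_indicator_eq_innerEdgeCount (S Y : Finset G) :
    ∑ g, ∑ s ∈ S, (if g ∈ Y then 1 else 0 : ℝ) * (if g * s ∈ Y then 1 else 0) =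
      innerEdgeCount S Y := by
  calc ∑ g, ∑ s ∈ S, (if g ∈ Y then 1 else 0 : ℝ) * (if g * s ∈ Y then 1 else 0)
      = ∑ g, if g ∈ Y then (#{s ∈ S | g * s ∈ Y} : ℝ) else 0 := by
        refine sum_congr rfl fun g _ => ?_
        by_cases h : g ∈ Y <;> simp [h]
    _ = innerEdgeCount S Y := by rw [sum_ite_mem, univ_inter, innerEdgeCount]; push_cast; rfl

theorem card_mul_innerEdgeCount_le (S : Finset G) {lam : ℝ}
    (hspec : ∀ f : G → ℝ, ∑ g, f g = 0 →
      ∑ g, ∑ s ∈ S, f g * f (g * s) ≤ lam * #S * ∑ g, f g ^ 2) (Y : Finset G) :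
    (Fintype.card G : ℝ) * innerEdgeCount S Y ≤
      #S * (#Y ^ 2 + lam * #Y * (Fintype.card G - #Y)) := by
  set n : ℝ := (Fintype.card G : ℝ)
  set y : ℝ := (#Y : ℝ)
  set d : ℝ := (#S : ℝ)
  set χ : G → ℝ := fun g => if g ∈ Y then 1 else 0
  have hχ : ∑ g, χ g = y := by simp [χ, y]
  have hχ_mul (s : G) : ∑ g, χ (g * s) = y := (Equiv.sum_comp (Equiv.mulRight s) χ).trans hχ
  have hχ_sq (g : G) : χ g ^ 2 = χ g := by by_cases h : g ∈ Y <;> simp [χ, h]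
  have hedges : ∑ g, ∑ s ∈ S, χ g * χ (g * s) = innerEdgeCount S Y :=
    sum_sum_indicator_mul_indicator_eq_innerEdgeCount S Y
  set f : G → ℝ := fun g => n * χ g - y
  have hf : ∑ g, f g = 0 := by
    simp [f, sum_sub_distrib, ← mul_sum, hχ, n]
  have hχ_left : ∑ g, ∑ _s ∈ S, χ g = d * y := by
    simp only [sum_const, nsmul_eq_mul, ← mul_sum, hχ, d]
  have hχ_right : ∑ g, ∑ s ∈ S, χ (g * s) = d * y := by
    rw [sum_comm]
    simp [hχ_mul, d]
  have hlhs : ∑ g, ∑ s ∈ S, f g * f (g * s) =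
      n ^ 2 * innerEdgeCount S Y - n * d * y ^ 2 := by
    calc ∑ g, ∑ s ∈ S, f g * f (g * s)
        = ∑ g, ∑ s ∈ S, (n ^ 2 * (χ g * χ (g * s)) - n * y * χ g - n * y * χ (g * s) + y ^ 2) :=
          sum_congr rfl fun g _ => sum_congr rfl fun s _ => by ring
      _ = n ^ 2 * ∑ g, ∑ s ∈ S, χ g * χ (g * s) - n * y * ∑ g, ∑ _s ∈ S, χ g
            - n * y * ∑ g, ∑ s ∈ S, χ (g * s) + n * d * y ^ 2 := by
          simp only [sum_add_distrib, sum_sub_distrib, ← mul_sum, sum_const, card_univ, nsmul_eq_mul]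
          ring
      _ = _ := by rw [hedges, hχ_left, hχ_right]; ring
  have hrhs : ∑ g, f g ^ 2 = n * y * (n - y) := by
    calc ∑ g, f g ^ 2 = ∑ g, ((n ^ 2 - 2 * n * y) * χ g + y ^ 2) :=
          sum_congr rfl fun g _ => by simp only [f]; linear_combination n ^ 2 * hχ_sq g
      _ = _ := by
          simp only [sum_add_distrib, ← mul_sum, hχ, sum_const, card_univ, nsmul_eq_mul]
          ring
  have key := hspec f hf
  rw [hlhs, hrhs] at key
  have hn : 0 < n := Nat.cast_pos.2 Fintype.card_pos
  refine le_of_mul_le_mul_left ?_ hn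
  linear_combination key

end Mixing

theorem sq_le_div_of_expander_mixing {n d y w E δ lam : ℝ} (hn : 0 < n) (hd : 0 < d)
    (hy : 0 < y) (hlam0 : 0 ≤ lam) (hlam1 : lam < 1) (hδlam : lam < δ)
    (hw_ge : δ * d * y ≤ w) (hw_le : w ≤ d * y) (hwE : w ≤ E)
    (hmix : n * E ≤ d * (y ^ 2 + lam * y * (n - y))) :
    ((δ - lam) / (1 - lam)) ^ 2 ≤ w / (n * d) := by
  have hdy : 0 < d * y := mul_pos hd hy
  have hδ1 : δ ≤ 1 := le_of_mul_le_mul_right (by linarith) hdy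
  have hδy : n * δ ≤ y + lam * (n - y) := by
    refine le_of_mul_le_mul_left ?_ hdy
    calc d * y * (n * δ) = n * (δ * d * y) := by ring
      _ ≤ n * E := mul_le_mul_of_nonneg_left (hw_ge.trans hwE) hn.le
      _ ≤ _ := hmix.trans_eq (by ring)
  set β := (δ - lam) / (1 - lam)
  have hβ0 : 0 ≤ β := div_nonneg (by linarith) (by linarith)
  have hβδ : β ≤ δ := by
    rw [div_le_iff₀ (by linarith)]
    nlinarith
  have hβy : β * n ≤ y := by
    rw [div_mul_eq_mul_div, div_le_iff₀ (by linarith)]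
    linarith
  rw [le_div_iff₀ (mul_pos hn hd)]
  calc β ^ 2 * (n * d) = β * (β * n) * d := by ring
    _ ≤ δ * y * d := by gcongr; linarith
    _ ≤ w := by linarith

theorem stmt18_general (q : ℕ) (G : Type*) [Group G] [Fintype G] [DecidableEq G]
    (S : Finset G) (hScard : S.card = q + 1)
    (hsym : ∀ s ∈ S, s⁻¹ ∈ S)
    (lam : ℝ) (hlam0 : 0 ≤ lam) (hlam1 : lam < 1)
    (hspec : ∀ f : G → ℝ, (∑ g : G, f g = 0) →
      ∑ g : G, ∑ s ∈ S, f g * f (g * s) ≤ lam * (q + 1) * ∑ g : G, f g ^ 2)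
    (B : Submodule (ZMod 2) (↥S → ZMod 2))
    (δ : ℝ) (hδlam : lam < δ)
    (hδ : ∀ b : ↥S → ZMod 2, b ∈ B → b ≠ 0 → δ ≤ (wtF b : ℝ) / (q + 1))
    (Ccode : Submodule (ZMod 2) (G × ↥S → ZMod 2))
    (hCcode : ∀ c : G × ↥S → ZMod 2, c ∈ Ccode ↔
      ((∀ (g : G) (s : ↥S), c (g * s, ⟨(s : G)⁻¹, hsym s s.2⟩) = c (g, s)) ∧
        ∀ g : G, (fun s : ↥S => c (g, s)) ∈ B)) :
    (Module.finrank (ZMod 2) Ccode : ℝ) / (Fintype.card G * (q + 1) / 2) ≥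
        2 * (Module.finrank (ZMod 2) B : ℝ) / (q + 1) - 1 ∧
    ∀ c ∈ Ccode, c ≠ 0 →
      (wtF c : ℝ) / (Fintype.card G * (q + 1)) ≥ ((δ - lam) / (1 - lam)) ^ 2 := by
  have hC : Ccode = cayleyCode hsym (ZMod 2) B :=
    SetLike.ext fun c => (hCcode c).trans (mem_cayleyCode hsym B c).symm
  have hS : (#S : ℝ) = q + 1 := by exact_mod_cast hScard
  have hn : (0 : ℝ) < Fintype.card G := Nat.cast_pos.2 Fintype.card_pos
  have hd : (0 : ℝ) < #S := by rw [hS]; positivity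
  subst hC
  rw [← hS] at hspec hδ ⊢
  constructor
  · have hrate : 2 * ((Fintype.card G : ℝ) * finrank (ZMod 2) B) ≤
        2 * finrank (ZMod 2) (cayleyCode hsym (ZMod 2) B) + Fintype.card G * #S := by
      exact_mod_cast card_mul_finrank_le_finrank_cayleyCode hsym B
    rw [ge_iff_le, div_sub_one hd.ne', div_le_div_iff₀ hd (by positivity)]
    linear_combination (#S / 2 : ℝ) * hrate
  · intro c hc hc0
    obtain ⟨hc_symm, hc_loc⟩ := (mem_cayleyCode hsym B c).1 hc
    refine ge_iff_le.2 (sq_le_div_of_expander_mixing hn hd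
      (Nat.cast_pos.2 (localSupport_nonempty hc0).card_pos) hlam0 hlam1 hδlam ?_ ?_
      (Nat.cast_le.2 (wtF_le_innerEdgeCount hsym c hc_symm))
      (card_mul_innerEdgeCount_le S hspec _))
    · rw [← Fintype.card_coe]
      refine mul_card_localSupport_le_wtF c fun g hg => ?_
      rw [Fintype.card_coe, ← le_div_iff₀ hd]
      exact hδ _ (hc_loc g) hg
    · rw [← Fintype.card_coe]; exact_mod_cast wtF_le_card_mul_card_localSupport c

/-- Tanner/Cayley-code theorem: let `Cay(G,S)` be the `(q+1)`-regular Cayley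
graph of `G` w.r.t. a symmetric generating set `S` of size `q+1`, with second
normalized adjacency eigenvalue `λ` (encoded via the spectral bound on
mean-zero functions). Let `B ⊆ 𝔽₂^S` be a linear code of rate `> 1/2` and
normalized distance `δ > λ`. Then the code `C(G,S,B)` of edge-labelings
whose local view at every vertex lies in `B` has rate at least `2r(B) − 1`
and normalized distance at least `((δ − λ)/(1 − λ))²`; in particular it is a
good code when these quantities are bounded below by constants. -/
theorem stmt18 (q : ℕ) (G : Type*) [Group G] [Fintype G] [DecidableEq G]
    (S : Finset G) (hScard : S.card = q + 1)
    (hsym : ∀ s ∈ S, s⁻¹ ∈ S)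
    (hgen : Subgroup.closure (S : Set G) = ⊤)
    (lam : ℝ) (hlam0 : 0 ≤ lam) (hlam1 : lam < 1)
    (hspec : ∀ f : G → ℝ, (∑ g : G, f g = 0) →
      ∑ g : G, ∑ s ∈ S, f g * f (g * s) ≤ lam * (q + 1) * ∑ g : G, f g ^ 2)
    (B : Submodule (ZMod 2) (↥S → ZMod 2))
    (hrate : 2 * Module.finrank (ZMod 2) B > q + 1)
    (δ : ℝ) (hδlam : lam < δ)
    (hδ : ∀ b : ↥S → ZMod 2, b ∈ B → b ≠ 0 → δ ≤ (wtF b : ℝ) / (q + 1))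
    (Ccode : Submodule (ZMod 2) (G × ↥S → ZMod 2))
    (hCcode : ∀ c : G × ↥S → ZMod 2, c ∈ Ccode ↔
      ((∀ (g : G) (s : ↥S), c (g * s, ⟨(s : G)⁻¹, hsym s s.2⟩) = c (g, s)) ∧
        ∀ g : G, (fun s : ↥S => c (g, s)) ∈ B)) :
    (Module.finrank (ZMod 2) Ccode : ℝ) / (Fintype.card G * (q + 1) / 2) ≥
        2 * (Module.finrank (ZMod 2) B : ℝ) / (q + 1) - 1 ∧
    ∀ c ∈ Ccode, c ≠ 0 →
      (wtF c : ℝ) / (Fintype.card G * (q + 1)) ≥ ((δ - lam) / (1 - lam)) ^ 2 :=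
  stmt18_general q G S hScard hsym lam hlam0 hlam1 hspec B δ hδlam hδ Ccode hCcode
end

section
/- Let q be a prime power with q + 1 = 2(2^m − 1) and m ≥ 10, and let a ≥ 8. Then the transformed BCH-based cyclic code B ⊆ 𝔽₂^{q+1} (obtained by interleaving two copies of BCH(m,r) with r = ⌊(n/m)(1 − 2/a)⌋, n = 2^m − 1) satisfies r(B) ≥ 1/2 + 1/a > 1/2 and δ(B) ≥ (a−2)/(2ma) > 2√q/(q+1). -/
/-
The rate bound is a degree count. Over `𝔽₂` the Frobenius identifies `minpoly (w ^ i)` with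
`minpoly (w ^ (2 ^ k * i))`, so the BCH generator `g = lcm_{i ≤ r} minpoly (w ^ i)` only involves
the odd exponents `o ≤ r`; moreover `2 ^ s + 1` and `2 ^ (m - s) + 1` are Frobenius conjugates,
which saves one more factor, and each factor has degree `≤ m`. Hence `2 deg g ≤ m r`, and the
code `B = (g ²)` of length `2n` has dimension `≥ 2n - 2 deg g`.

For the distance, `g ² = g(X ²)` over `𝔽₂`, so `g` divides both the even part `∑ f₂ₜ Xᵗ` and
the odd part `∑ f₂ₜ₊₁ Xᵗ` of every codeword `f`. One of them is nonzero, has degree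
`< n = ord w`, vanishes at `w, …, w ^ r`, and hence has at least `r + 1` nonzero coefficients by
the BCH bound (a Vandermonde argument); its support injects into that of `f`.

The final inequality is elementary for `m ≥ 11`; it fails for `m = 10`, but then
`q = 2045 = 5 · 409` is not a prime power.
-/

open Polynomial

/-- Hamming weight of a vector over `𝔽₂`. -/
def wt {n : ℕ} (c : Fin n → ZMod 2) : ℕ :=
  (Finset.univ.filter fun i => c i ≠ 0).card

open Finset

section PolyOf

variable {N : ℕ}

theorem polyOf_eq_degreeLTEquiv_symm (c : Fin N → ZMod 2) :
    polyOf c = ((degreeLTEquiv (ZMod 2) N).symm c : (ZMod 2)[X]) := by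
  simp [polyOf, degreeLTEquiv, C_mul_X_pow_eq_monomial]

theorem polyOf_degreeLTEquiv (f : degreeLT (ZMod 2) N) :
    polyOf (degreeLTEquiv (ZMod 2) N f) = f := by
  rw [polyOf_eq_degreeLTEquiv_symm, LinearEquiv.symm_apply_apply]

theorem polyOf_mem_degreeLT (c : Fin N → ZMod 2) : polyOf c ∈ degreeLT (ZMod 2) N := by
  rw [polyOf_eq_degreeLTEquiv_symm]
  exact Submodule.coe_mem _

theorem polyOf_eq_zero_iff {c : Fin N → ZMod 2} : polyOf c = 0 ↔ c = 0 := by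
  rw [polyOf_eq_degreeLTEquiv_symm, Submodule.coe_eq_zero, LinearEquiv.map_eq_zero_iff]

theorem coeff_polyOf (c : Fin N → ZMod 2) (i : Fin N) : (polyOf c).coeff i = c i := by
  rw [polyOf_eq_degreeLTEquiv_symm]
  exact congrFun ((degreeLTEquiv (ZMod 2) N).apply_symm_apply c) i

theorem wt_eq_card_support_polyOf (c : Fin N → ZMod 2) : wt c = #(polyOf c).support := by
  have : (polyOf c).support = (univ.filter fun i => c i ≠ 0).map Fin.valEmbedding := by
    ext j
    simp only [mem_support_iff, mem_map, mem_filter, mem_univ, true_and, Fin.valEmbedding_apply]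
    refine ⟨fun h => ?_, by rintro ⟨i, hi, rfl⟩; rwa [coeff_polyOf]⟩
    have hj : j < N := by
      by_contra! hj
      exact h (coeff_eq_zero_of_degree_lt
        ((mem_degreeLT.mp (polyOf_mem_degreeLT c)).trans_le (by exact_mod_cast hj)))
    exact ⟨⟨j, hj⟩, by rwa [← coeff_polyOf c ⟨j, hj⟩], rfl⟩
  rw [this, card_map, wt]

theorem sub_natDegree_le_finrank {G : (ZMod 2)[X]} (hG : G ≠ 0)
    {B : Submodule (ZMod 2) (Fin N → ZMod 2)} (hB : ∀ c, c ∈ B ↔ G ∣ polyOf c) :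
    N - G.natDegree ≤ Module.finrank (ZMod 2) B := by
  set k := N - G.natDegree
  have hmul : ∀ x ∈ degreeLT (ZMod 2) k, G * x ∈ degreeLT (ZMod 2) N := fun x hx => by
    rcases eq_or_ne x 0 with rfl | hx0
    · simp
    rw [mem_degreeLT, ← natDegree_lt_iff_degree_lt hx0] at hx
    rw [mem_degreeLT, ← natDegree_lt_iff_degree_lt (mul_ne_zero hG hx0), natDegree_mul hG hx0]
    omega
  let ψ := (degreeLTEquiv (ZMod 2) N).toLinearMap ∘ₗ (LinearMap.mulLeft (ZMod 2) G).restrict hmul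
  have hψ : ∀ x, polyOf (ψ x) = G * x := fun x => polyOf_degreeLTEquiv _
  let φ : degreeLT (ZMod 2) k →ₗ[ZMod 2] B :=
    ψ.codRestrict B fun x => (hB _).mpr (hψ x ▸ dvd_mul_right G x)
  have hφ : Function.Injective φ := fun x y hxy => by
    have := congrArg polyOf (congrArg Subtype.val hxy)
    rw [LinearMap.codRestrict_apply, LinearMap.codRestrict_apply, hψ, hψ] at this
    exact Subtype.ext (mul_left_cancel₀ hG this)
  simpa [k, LinearEquiv.finrank_eq (degreeLTEquiv _ k)] using
    LinearMap.finrank_le_finrank_of_injective hφ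

end PolyOf

theorem natDegree_lcm_le_of_forall_exists_eq {ι K : Type*} [Field K] [DecidableEq K]
    {S O : Finset ι} {f : ι → K[X]} (hf : ∀ o ∈ O, f o ≠ 0)
    (hS : ∀ i ∈ S, ∃ o ∈ O, f i = f o) {D : ℕ} (hD : ∀ o ∈ O, (f o).natDegree ≤ D) :
    (S.lcm f).natDegree ≤ #O * D := by
  have hdvd : S.lcm f ∣ ∏ o ∈ O, f o := Finset.lcm_dvd fun i hi => by
    obtain ⟨o, ho, hio⟩ := hS i hi
    exact hio ▸ dvd_prod_of_mem f ho
  calc (S.lcm f).natDegree ≤ (∏ o ∈ O, f o).natDegree :=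
        natDegree_le_of_dvd hdvd (prod_ne_zero_iff.mpr hf)
    _ = ∑ o ∈ O, (f o).natDegree := natDegree_prod _ _ hf
    _ ≤ #O * D := by simpa using sum_le_card_nsmul O _ D hD

section Frobenius

variable {K L : Type*} [Field K] [Fintype K] [Field L] [Algebra K L] [Algebra.IsAlgebraic K L]

theorem minpoly_pow_card_pow (x : L) (k : ℕ) :
    minpoly K (x ^ Fintype.card K ^ k) = minpoly K x := by
  induction k with
  | zero => simp
  | succ k ih =>
    rw [pow_succ, pow_mul, ← ih]
    exact minpoly.algEquiv_eq (FiniteField.frobeniusAlgEquivOfAlgebraic K L) _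

end Frobenius

section CharTwo

variable {L : Type*} [Field L] [Algebra (ZMod 2) L] [Algebra.IsAlgebraic (ZMod 2) L]

theorem minpoly_pow_two_pow (x : L) (k : ℕ) :
    minpoly (ZMod 2) (x ^ 2 ^ k) = minpoly (ZMod 2) x := by
  simpa using minpoly_pow_card_pow (K := ZMod 2) x k

theorem exists_odd_minpoly_pow_eq (x : L) {i : ℕ} (hi : i ≠ 0) :
    ∃ o, Odd o ∧ o ≤ i ∧ minpoly (ZMod 2) (x ^ i) = minpoly (ZMod 2) (x ^ o) := by
  obtain ⟨k, o, ho, rfl⟩ := Nat.exists_eq_two_pow_mul_odd hi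
  refine ⟨o, ho, Nat.le_mul_of_pos_left o (by positivity), ?_⟩
  rw [mul_comm, pow_mul, minpoly_pow_two_pow]

end CharTwo

theorem minpoly_pow_two_pow_add_one {m s : ℕ} (hm : m ≠ 0) (hs : s ≤ m)
    (x : GaloisField 2 m) :
    minpoly (ZMod 2) (x ^ (2 ^ s + 1)) = minpoly (ZMod 2) (x ^ (2 ^ (m - s) + 1)) := by
  have hx : x ^ 2 ^ m = x := by
    have := Fintype.ofFinite (GaloisField 2 m)
    have := FiniteField.pow_card x
    rwa [← Nat.card_eq_fintype_card, GaloisField.card 2 m hm] at this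
  rw [← minpoly_pow_two_pow _ (m - s), ← pow_mul, add_mul, one_mul, ← pow_add,
    Nat.add_sub_cancel' hs, pow_add, hx, pow_add, pow_one, mul_comm]

theorem card_filter_odd_Icc_le (r : ℕ) : #((Icc 1 r).filter Odd) ≤ (r + 1) / 2 := by
  calc #((Icc 1 r).filter Odd) ≤ #((range ((r + 1) / 2)).image fun k => 2 * k + 1) := by
        refine card_le_card fun o ho => ?_
        simp only [mem_filter, mem_Icc, mem_image, mem_range] at ho ⊢
        obtain ⟨⟨-, hor⟩, k, rfl⟩ := ho
        exact ⟨k, by omega, rfl⟩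
    _ ≤ (r + 1) / 2 := card_image_le.trans (card_range _).le

theorem two_mul_natDegree_lcm_minpoly_le {m r : ℕ} (hm : 3 ≤ m) (x : GaloisField 2 m)
    (hr : 2 ^ (m / 2 + 1) + 1 ≤ r) :
    2 * ((Icc 1 r).lcm fun i => minpoly (ZMod 2) (x ^ i)).natDegree ≤ m * r := by
  set s := m / 2 + 1
  set o₀ := 2 ^ s + 1
  set o₁ := 2 ^ (m - s) + 1
  set O := ((Icc 1 r).filter Odd).erase o₀
  have hodd : ∀ t, t ≠ 0 → Odd (2 ^ t + 1) := fun t ht =>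
    Even.add_one (Nat.even_pow.mpr ⟨even_two, ht⟩)
  have ho₀ : o₀ ∈ (Icc 1 r).filter Odd :=
    mem_filter.mpr ⟨mem_Icc.mpr ⟨Nat.le_add_left 1 _, hr⟩, hodd s (by omega)⟩
  have ho₁ : o₁ ∈ O := by
    have : 2 ^ (m - s) < 2 ^ s := Nat.pow_lt_pow_right one_lt_two (by omega)
    exact mem_erase.mpr ⟨by omega,
      mem_filter.mpr ⟨mem_Icc.mpr ⟨Nat.le_add_left 1 _, by omega⟩, hodd (m - s) (by omega)⟩⟩
  have hcover : ∀ i ∈ Icc 1 r, ∃ o ∈ O,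
      minpoly (ZMod 2) (x ^ i) = minpoly (ZMod 2) (x ^ o) := by
    intro i hi
    obtain ⟨o, ho, hoi, heq⟩ := exists_odd_minpoly_pow_eq x (i := i) (by simp at hi; omega)
    by_cases h : o = o₀
    · exact ⟨o₁, ho₁, by rw [heq, h, minpoly_pow_two_pow_add_one (by omega) (by omega)]⟩
    · refine ⟨o, mem_erase.mpr ⟨h, mem_filter.mpr ⟨?_, ho⟩⟩, heq⟩
      simp only [mem_Icc] at hi ⊢
      exact ⟨ho.pos, hoi.trans hi.2⟩
  have hdeg := natDegree_lcm_le_of_forall_exists_eq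
    (fun o _ => minpoly.ne_zero (IsIntegral.of_finite (ZMod 2) (x ^ o))) hcover
    (fun o _ => (minpoly.natDegree_le (x ^ o)).trans (GaloisField.finrank 2 (by omega)).le)
  have hcard := card_filter_odd_Icc_le r
  rw [card_erase_of_mem ho₀] at hdeg
  calc 2 * _ ≤ 2 * (#((Icc 1 r).filter Odd) - 1) * m := by rw [mul_assoc]; omega
    _ ≤ r * m := Nat.mul_le_mul_right m (by omega)
    _ = m * r := mul_comm r m

theorem Finset.eq_zero_of_forall_sum_mul_pow_eq_zero {ι R : Type*} [CommRing R] [IsDomain R]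
    {S : Finset ι} {f v : ι → R} (hf : Set.InjOn f S)
    (hfv : ∀ i < #S, ∑ j ∈ S, v j * f j ^ i = 0) : ∀ j ∈ S, v j = 0 := by
  let e := S.equivFin
  have hv := Matrix.eq_zero_of_forall_pow_sum_mul_pow_eq_zero (f := fun k => f (e.symm k))
    (v := fun k => v (e.symm k))
    (fun k l hkl => e.symm.injective (Subtype.ext (hf (e.symm k).2 (e.symm l).2 hkl)))
    fun i => by
      rw [← hfv i i.2, ← sum_coe_sort S]
      exact e.symm.sum_comp fun j => v j * f j ^ (i : ℕ)
  intro j hj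
  simpa [e] using congrFun hv (e ⟨j, hj⟩)

theorem add_one_le_card_support_of_aeval_pow_eq_zero {K L : Type*} [Field K] [Field L]
    [Algebra K L] {w : L} {r : ℕ} {h : K[X]} (hne : h ≠ 0) (hdeg : h.natDegree < orderOf w)
    (hroots : ∀ i ∈ Icc 1 r, aeval (w ^ i) h = 0) : r + 1 ≤ #h.support := by
  by_contra! hcard
  have hw : w ≠ 0 := by rintro rfl; simp at hdeg
  have hinj : Set.InjOn (w ^ ·) h.support := fun j hj k hk hjk =>
    pow_injOn_Iio_orderOf ((le_natDegree_of_mem_supp j hj).trans_lt hdeg)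
      ((le_natDegree_of_mem_supp k hk).trans_lt hdeg) hjk
  -- `∑ⱼ (hⱼ wʲ) (wʲ)ⁱ = h(w ^ (i + 1)) = 0` for `i < #supp h`: a Vandermonde system.
  have hv := eq_zero_of_forall_sum_mul_pow_eq_zero
    (v := fun j => algebraMap K L (h.coeff j) * w ^ j) hinj fun i hi => by
      rw [← hroots (i + 1) (mem_Icc.mpr ⟨by omega, by omega⟩), aeval_def, eval₂_eq_sum,
        sum_def]
      exact sum_congr rfl fun j _ => by ring
  obtain ⟨j, hj⟩ := nonempty_support_iff.mpr hne
  simpa [hw, mem_support_iff.mp hj] using hv j hj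

section Contract

variable {R : Type*} [CommSemiring R]

theorem contract_two_X_mul (f : R[X]) : contract 2 (X * f) = X * contract 2 (divX f) := by
  ext (_ | t)
  · simp [coeff_contract two_ne_zero]
  · rw [coeff_contract two_ne_zero, coeff_X_mul, coeff_contract two_ne_zero, coeff_divX,
      show (t + 1) * 2 = t * 2 + 1 + 1 by ring, coeff_X_mul]

theorem card_support_le_of_coeff_eq_comp {f g : R[X]} {ι : ℕ → ℕ}
    (hι : Function.Injective ι) (h : ∀ t, g.coeff t = f.coeff (ι t)) : #g.support ≤ #f.support :=
  card_le_card_of_injOn ι (fun t ht => by simpa [h] using ht) hι.injOn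

theorem contract_two_ne_zero_or_contract_two_divX_ne_zero {f : R[X]} (hf : f ≠ 0) :
    contract 2 f ≠ 0 ∨ contract 2 (divX f) ≠ 0 := by
  by_contra! h
  refine hf (ext fun j => ?_)
  obtain ⟨t, rfl | rfl⟩ := Nat.even_or_odd' j
  · simpa [coeff_contract two_ne_zero, mul_comm] using congrArg (coeff · t) h.1
  · simpa [coeff_contract two_ne_zero, coeff_divX, mul_comm] using congrArg (coeff · t) h.2

end Contract

theorem add_one_le_card_support_of_expand_two_dvd {K L : Type*} [Field K] [Field L]
    [Algebra K L] {w : L} {r : ℕ} {g f : K[X]} (hg : ∀ i ∈ Icc 1 r, aeval (w ^ i) g = 0)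
    (hf : f ≠ 0) (hfdeg : f.natDegree < 2 * orderOf w) (hdvd : expand K 2 g ∣ f) :
    r + 1 ≤ #f.support := by
  have hw : w ≠ 0 := by rintro rfl; simp at hfdeg
  have half : ∀ (H : K[X]) (e : ℕ), (∀ t, H.coeff t = f.coeff (t * 2 + e)) → H ≠ 0 →
      (∀ i ∈ Icc 1 r, aeval (w ^ i) H = 0) → r + 1 ≤ #f.support := by
    intro H e hH hne hroots
    have hdegH : H.natDegree < orderOf w := by
      have := le_natDegree_of_ne_zero
        ((hH H.natDegree).symm.trans_ne (leadingCoeff_ne_zero.mpr hne))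
      omega
    exact (add_one_le_card_support_of_aeval_pow_eq_zero hne hdegH hroots).trans
      (card_support_le_of_coeff_eq_comp (fun a b hab => by omega) hH)
  obtain ⟨u, rfl⟩ := hdvd
  rcases contract_two_ne_zero_or_contract_two_divX_ne_zero hf with h | h
  · refine half _ 0 (coeff_contract two_ne_zero _) h fun i hi => ?_
    rw [mul_comm, contract_mul_expand two_ne_zero, map_mul, hg i hi, mul_zero]
  · refine half _ 1 (fun t => by rw [coeff_contract two_ne_zero, coeff_divX]) h fun i hi => ?_
    have : aeval (w ^ i) (X * contract 2 (divX (expand K 2 g * u))) = 0 := by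
      rw [← contract_two_X_mul, mul_left_comm, mul_comm, contract_mul_expand two_ne_zero, map_mul,
        hg i hi, mul_zero]
    simpa [hw] using this

theorem four_mul_two_pow_half_le {m : ℕ} (hm : 10 ≤ m) :
    4 * m * (2 ^ (m / 2 + 1) + 1) + 3 ≤ 3 * 2 ^ m := by
  induction m using Nat.strong_induction_on with
  | _ m ih =>
    rcases (by omega : m = 10 ∨ m = 11 ∨ 12 ≤ m) with rfl | rfl | hm12
    · norm_num
    · norm_num
    · obtain ⟨k, rfl⟩ : ∃ k, m = k + 2 := ⟨m - 2, by omega⟩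
      have ih := ih k (by omega) (by omega)
      have hhalf : 2 ^ ((k + 2) / 2 + 1) = 2 * 2 ^ (k / 2 + 1) := by
        rw [show (k + 2) / 2 + 1 = k / 2 + 1 + 1 by omega, pow_succ, mul_comm]
      rw [hhalf, show 2 ^ (k + 2) = 4 * 2 ^ k by ring]
      nlinarith [Nat.one_le_two_pow (n := k / 2 + 1)]

theorem two_pow_half_add_one_le_div {m a : ℕ} (hm : 10 ≤ m) (ha : 8 ≤ a) :
    2 ^ (m / 2 + 1) + 1 ≤ (2 ^ m - 1) * (a - 2) / (m * a) := by
  rw [Nat.le_div_iff_mul_le (by positivity)]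
  have h := four_mul_two_pow_half_le hm
  have h' : 3 * a ≤ 4 * (a - 2) := by omega
  have : 4 * ((2 ^ (m / 2 + 1) + 1) * (m * a)) ≤ 4 * ((2 ^ m - 1) * (a - 2)) := by
    calc 4 * ((2 ^ (m / 2 + 1) + 1) * (m * a)) = (4 * m * (2 ^ (m / 2 + 1) + 1)) * a := by ring
      _ ≤ (3 * (2 ^ m - 1)) * a := Nat.mul_le_mul_right a (by omega)
      _ = (2 ^ m - 1) * (3 * a) := by ring
      _ ≤ (2 ^ m - 1) * (4 * (a - 2)) := Nat.mul_le_mul_left _ h'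
      _ = 4 * ((2 ^ m - 1) * (a - 2)) := by ring
  omega

theorem sq_le_two_pow {m : ℕ} (hm : 11 ≤ m) : 256 * m ^ 2 + 27 ≤ 18 * 2 ^ m := by
  induction m, hm using Nat.le_induction with
  | base => norm_num
  | succ k hk ih => rw [show 2 ^ (k + 1) = 2 * 2 ^ k by ring]; nlinarith

theorem not_prime_pow_of_dvd_of_dvd {n p₁ p₂ : ℕ} (hp₁ : p₁.Prime) (hp₂ : p₂.Prime)
    (hne : p₁ ≠ p₂) (h₁ : p₁ ∣ n) (h₂ : p₂ ∣ n) : ¬ ∃ p k : ℕ, p.Prime ∧ 0 < k ∧ n = p ^ k := by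
  rintro ⟨p, k, hp, -, rfl⟩
  exact hne (((Nat.prime_dvd_prime_iff_eq hp₁ hp).mp (hp₁.dvd_of_dvd_pow h₁)).trans
    ((Nat.prime_dvd_prime_iff_eq hp₂ hp).mp (hp₂.dvd_of_dvd_pow h₂)).symm)

theorem eleven_le_of_prime_pow {m q : ℕ} (hm : 10 ≤ m) (hq : q + 1 = 2 * (2 ^ m - 1))
    (hqpp : ∃ p k : ℕ, p.Prime ∧ 0 < k ∧ q = p ^ k) : 11 ≤ m := by
  by_contra! h
  obtain rfl : m = 10 := by omega
  obtain rfl : q = 2045 := by norm_num at hq; omega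
  exact not_prime_pow_of_dvd_of_dvd (p₁ := 5) (p₂ := 409) (by norm_num) (by norm_num)
    (by norm_num) (by norm_num) (by norm_num) hqpp

theorem two_mul_sqrt_div_lt {m a q : ℝ} (hm : 0 < m) (ha : 8 ≤ a) (hq : 256 * m ^ 2 ≤ 9 * q) :
    2 * Real.sqrt q / (q + 1) < (a - 2) / (2 * m * a) := by
  have hq0 : 0 < q := by nlinarith
  have hsqrt : 16 * m / 3 ≤ Real.sqrt q := Real.le_sqrt_of_sq_le (by nlinarith)
  have hsq := Real.mul_self_sqrt hq0.le
  calc 2 * Real.sqrt q / (q + 1) < 3 / (8 * m) := by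
        rw [div_lt_div_iff₀ (by positivity) (by positivity)]
        nlinarith
    _ ≤ (a - 2) / (2 * m * a) := by
        rw [div_le_div_iff₀ (by positivity) (by positivity)]
        nlinarith

theorem one_div_two_add_one_div_le_div {a n d F q : ℕ} (ha : 2 ≤ a) (hq : q + 1 = 2 * n)
    (hF : q + 1 ≤ F + d) (hd : d * a ≤ n * (a - 2)) :
    1 / 2 + 1 / (a : ℝ) ≤ F / (q + 1) := by
  have hqn : (q : ℝ) + 1 = 2 * n := by exact_mod_cast hq
  have hF' : (q : ℝ) + 1 ≤ F + d := by exact_mod_cast hF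
  have hd' : (d * a : ℝ) ≤ n * (a - 2) := by
    rw [← Nat.cast_ofNat, ← Nat.cast_sub ha]; exact_mod_cast hd
  have ha0 : (0 : ℝ) < a := by positivity
  rw [div_add_div _ _ two_ne_zero ha0.ne', div_le_div_iff₀ (by positivity) (by positivity)]
  nlinarith [mul_le_mul_of_nonneg_left hF' ha0.le]

theorem sub_two_div_le_div {a m n r W q : ℕ} (ha : 2 ≤ a) (hq : q + 1 = 2 * n)
    (hr : n * (a - 2) < (r + 1) * (m * a)) (hW : r + 1 ≤ W) :
    ((a : ℝ) - 2) / (2 * m * a) ≤ W / (q + 1) := by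
  have hm : 0 < m := Nat.pos_of_ne_zero fun h => by simp [h] at hr
  have hqn : (q : ℝ) + 1 = 2 * n := by exact_mod_cast hq
  have hr' : (n * (a - 2) : ℝ) ≤ (r + 1) * (m * a) := by
    rw [← Nat.cast_ofNat, ← Nat.cast_sub ha]; exact_mod_cast hr.le
  have hW' : (r : ℝ) + 1 ≤ W := by exact_mod_cast hW
  rw [div_le_div_iff₀ (by positivity) (by positivity)]
  nlinarith [mul_le_mul_of_nonneg_right hW' (by positivity : (0 : ℝ) ≤ m * a)]

/-- Let `q` be a prime power with `q + 1 = 2(2^m − 1)`, `m ≥ 10` and `a ≥ 8`.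
The transformed BCH-based cyclic code `B ⊆ 𝔽₂^{q+1}` (the interleaving of two
copies of `BCH(m,r)` with `r = ⌊(n/m)(1 − 2/a)⌋`, `n = 2^m − 1`, i.e. the
cyclic code of length `q+1` generated by `h_r²`) has rate
`r(B) ≥ 1/2 + 1/a > 1/2` and normalized distance
`δ(B) ≥ (a−2)/(2ma) > 2√q/(q+1)`. -/
theorem stmt19 (m a q : ℕ) (hm : 10 ≤ m) (ha : 8 ≤ a)
    (hq : q + 1 = 2 * (2 ^ m - 1))
    (hqpp : ∃ p k : ℕ, p.Prime ∧ 0 < k ∧ q = p ^ k)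
    (w : GaloisField 2 m) (hw : orderOf w = 2 ^ m - 1)
    (B : Submodule (ZMod 2) (Fin (q + 1) → ZMod 2))
    (hB : ∀ c : Fin (q + 1) → ZMod 2, c ∈ B ↔
      ((Finset.Icc 1 ((2 ^ m - 1) * (a - 2) / (m * a))).lcm
          fun i => minpoly (ZMod 2) (w ^ i)) ^ 2 ∣ polyOf c) :
    (Module.finrank (ZMod 2) B : ℝ) / (q + 1) ≥ 1 / 2 + 1 / a ∧
    (∀ c ∈ B, c ≠ 0 →
      ((a : ℝ) - 2) / (2 * m * a) ≤ (wt c : ℝ) / (q + 1)) ∧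
    ((a : ℝ) - 2) / (2 * m * a) > 2 * Real.sqrt q / (q + 1) := by
  set n := 2 ^ m - 1
  set r := n * (a - 2) / (m * a)
  set g := (Icc 1 r).lcm fun i => minpoly (ZMod 2) (w ^ i)
  have hg0 : g ≠ 0 := lcm_eq_zero_iff.not.mpr fun ⟨i, _, hi⟩ =>
    minpoly.ne_zero (IsIntegral.of_finite (ZMod 2) (w ^ i)) hi
  have hroots : ∀ i ∈ Icc 1 r, aeval (w ^ i) g = 0 := fun i hi =>
    aeval_eq_zero_of_dvd_aeval_eq_zero (dvd_lcm hi) (minpoly.aeval _ _)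
  have hdeg : 2 * g.natDegree ≤ m * r :=
    two_mul_natDegree_lcm_minpoly_le (by omega) w (two_pow_half_add_one_le_div hm ha)
  refine ⟨?_, fun c hc hc0 => ?_, ?_⟩
  · have hk := sub_natDegree_le_finrank (pow_ne_zero 2 hg0) hB
    rw [natDegree_pow] at hk
    refine one_div_two_add_one_div_le_div (d := 2 * g.natDegree) (by omega) hq (by omega) ?_
    calc 2 * g.natDegree * a ≤ m * r * a := Nat.mul_le_mul_right a hdeg
      _ = r * (m * a) := by ring
      _ ≤ n * (a - 2) := Nat.div_mul_le_self _ _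
  · have hf0 : polyOf c ≠ 0 := polyOf_eq_zero_iff.not.mpr hc0
    have hfdeg : (polyOf c).natDegree < 2 * orderOf w := by
      rw [hw, ← hq, natDegree_lt_iff_degree_lt hf0]
      exact mem_degreeLT.mp (polyOf_mem_degreeLT c)
    have hr : n * (a - 2) < (r + 1) * (m * a) := by
      rw [add_one_mul]; exact Nat.lt_div_mul_add (by positivity)
    refine sub_two_div_le_div (by omega) hq hr (wt_eq_card_support_polyOf c ▸ ?_)
    exact add_one_le_card_support_of_expand_two_dvd hroots hf0 hfdeg
      (ZMod.expand_card g ▸ (hB c).mp hc)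
  · have hm11 := eleven_le_of_prime_pow hm hq hqpp
    have : 256 * m ^ 2 ≤ 9 * q := by have := sq_le_two_pow hm11; omega
    exact two_mul_sqrt_div_lt (by positivity) (by exact_mod_cast ha) (by exact_mod_cast this)
end
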